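/- arXiv:2411.06369 — 4 statements merged into one kernel-verified Lean document; each statement's English description precedes it below -/
import Mathlib

section
/- Let n ≥ 1, let ω ∈ ℝ^n, and let A : ℝ^n → ℝ^n be continuous with compact support. Define W : ℝ^n → ℂ by W(x) = exp( i · ∫_{(0,∞)} ⟨A(x + s·ω), ω⟩ ds ). Then for every x ∈ ℝ^n and every t₀ ∈ ℝ, the function t ↦ W(x + t·ω) is differentiable at t₀ with derivative −i·⟨A(x + t₀·ω), ω⟩·W(x + t₀·ω). In particular, W satisfies the transport equation ω·∇W + i(ω·A)W = 0 along every line in direction ω. -/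
/-!
Along the line `t ↦ x + t • ω` the phase of `W` is `F t = ∫_{(t, ∞)} f`, where
`f s = ⟨A (x + s • ω), ω⟩`. Since `A` is continuous with compact support, `f` is continuous and
integrable, so by the fundamental theorem of calculus `F' = -f`, and the chain rule for `exp`
gives the transport equation.
-/

open MeasureTheory Set Filter

theorem HasCompactSupport.comp_line {E F : Type*} [NormedAddCommGroup E] [NormedSpace ℝ E]
    [Zero F] {g : E → F} (hg : HasCompactSupport g) (x : E) {v : E} (hv : v ≠ 0) :
    HasCompactSupport fun s : ℝ => g (x + s • v) :=
  hg.comp_isClosedEmbedding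
    ((Homeomorph.addLeft x).isClosedEmbedding.comp (isClosedEmbedding_smul_left hv))

theorem hasCompactSupport_inner_comp_line {E : Type*} [NormedAddCommGroup E]
    [InnerProductSpace ℝ E] {A : E → E} (hA : HasCompactSupport A) (x ω : E) :
    HasCompactSupport fun s : ℝ => inner ℝ (A (x + s • ω)) ω := by
  rcases eq_or_ne ω 0 with rfl | hω
  · simp only [inner_zero_right]
    exact HasCompactSupport.zero
  · exact (hA.comp_left (g := fun a => inner ℝ a ω) (inner_zero_left ω)).comp_line x hω

theorem setIntegral_Ioi_comp_add_right {E : Type*} [NormedAddCommGroup E] [NormedSpace ℝ E]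
    (f : ℝ → E) (a t : ℝ) : ∫ s in Ioi a, f (s + t) = ∫ s in Ioi (a + t), f s := by
  have hpre : (fun s : ℝ => s + t) ⁻¹' Ioi (a + t) = Ioi a := by
    ext s; simp
  rw [← hpre]
  exact (measurePreserving_add_right volume t).setIntegral_preimage_emb
    (MeasurableEquiv.addRight t).measurableEmbedding f _

theorem hasDerivAt_setIntegral_Ioi {E : Type*} [NormedAddCommGroup E] [NormedSpace ℝ E]
    [CompleteSpace E] {f : ℝ → E} (hf : Integrable f) {t₀ : ℝ} (hft₀ : ContinuousAt f t₀) :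
    HasDerivAt (fun t => ∫ s in Ioi t, f s) (-f t₀) t₀ := by
  have hsplit : ∀ t : ℝ, ∫ s in Ioi t, f s = (∫ s in Ioi (0 : ℝ), f s) - ∫ s in (0 : ℝ)..t, f s :=
    fun t => by
      rw [← intervalIntegral.integral_Ioi_sub_Ioi' hf.integrableOn hf.integrableOn, sub_sub_cancel]
  have hFTC := intervalIntegral.integral_hasDerivAt_right (a := 0) hf.intervalIntegrable
    hf.aestronglyMeasurable.stronglyMeasurableAtFilter hft₀
  exact (hFTC.const_sub _).congr_of_eventuallyEq (Eventually.of_forall hsplit)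

theorem amplitude_transport_equation_general
    (n : ℕ) (ω : EuclideanSpace ℝ (Fin n))
    (A : EuclideanSpace ℝ (Fin n) → EuclideanSpace ℝ (Fin n))
    (hA : Continuous A) (hsupp : HasCompactSupport A)
    (W : EuclideanSpace ℝ (Fin n) → ℂ)
    (hW : ∀ x, W x = Complex.exp
      (Complex.I * ((∫ s in Set.Ioi (0 : ℝ), (inner ℝ (A (x + s • ω)) ω : ℝ) : ℝ) : ℂ))) :
    ∀ (x : EuclideanSpace ℝ (Fin n)) (t₀ : ℝ),
      HasDerivAt (fun t : ℝ => W (x + t • ω))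
        (-Complex.I * ((inner ℝ (A (x + t₀ • ω)) ω : ℝ) : ℂ) * W (x + t₀ • ω)) t₀ := by
  intro x t₀
  set f : ℝ → ℝ := fun s => inner ℝ (A (x + s • ω)) ω
  have hf_cont : Continuous f := by fun_prop
  have hf_int : Integrable f :=
    hf_cont.integrable_of_hasCompactSupport (hasCompactSupport_inner_comp_line hsupp x ω)
  have hW_line : ∀ t : ℝ, W (x + t • ω) = Complex.exp (Complex.I * ↑(∫ s in Ioi t, f s)) := by
    intro t
    rw [hW, ← zero_add t, ← setIntegral_Ioi_comp_add_right]
    simp only [f, add_smul, zero_add, add_assoc, add_comm (t • ω)]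
  rw [hW_line t₀]
  refine (((hasDerivAt_setIntegral_Ioi hf_int hf_cont.continuousAt).ofReal_comp.const_mul
    Complex.I).cexp.congr_of_eventuallyEq (Eventually.of_forall hW_line)).congr_deriv ?_
  push_cast
  ring

/-- The amplitude factor `W` of the geometric optics solutions solves the transport
equation `ω·∇W + i(ω·A)W = 0` along every line in direction `ω`. -/
theorem amplitude_transport_equation
    (n : ℕ) (hn : 1 ≤ n) (ω : EuclideanSpace ℝ (Fin n))
    (A : EuclideanSpace ℝ (Fin n) → EuclideanSpace ℝ (Fin n))
    (hA : Continuous A) (hsupp : HasCompactSupport A)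
    (W : EuclideanSpace ℝ (Fin n) → ℂ)
    (hW : ∀ x, W x = Complex.exp
      (Complex.I * ((∫ s in Set.Ioi (0 : ℝ), (inner ℝ (A (x + s • ω)) ω : ℝ) : ℝ) : ℂ))) :
    ∀ (x : EuclideanSpace ℝ (Fin n)) (t₀ : ℝ),
      HasDerivAt (fun t : ℝ => W (x + t • ω))
        (-Complex.I * ((inner ℝ (A (x + t₀ • ω)) ω : ℝ) : ℂ) * W (x + t₀ • ω)) t₀ :=
  amplitude_transport_equation_general n ω A hA hsupp W hW
end

section
/- Let n ≥ 1, m ≥ 1, let ω₀ ∈ ℝ^n with ω₀ ≠ 0, and let ω : {1,…,m} → ℝ^n with ω_ℓ ≠ 0 for every ℓ. Assume that ‖ω₁‖² = Σ_{ℓ=2}^m ‖ω_ℓ‖² + ‖ω₀‖². Then for every subset S ⊆ {1,…,m}, if Σ_{ℓ∈S} ‖ω_ℓ‖² = Σ_{ℓ∉S} ‖ω_ℓ‖² + ‖ω₀‖², then S = {1}. -/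
/-!
Write `f ℓ = ‖ω_ℓ‖² > 0` and `c = ‖ω₀‖² > 0`. Both the hypothesis on `ω₁` and the resonance
condition on `S` say that a sum of weights equals half of `∑ f + c`, so `∑_{ℓ ∈ S} f ℓ = f 1`.
Since `f 1` exceeds the sum of all other weights by `c`, a set `S` missing `1` has too small a
sum, and a set containing `1` and anything else has too large a sum.
-/

open Finset

section

variable {ι : Type*} [DecidableEq ι]

theorem Finset.sum_eq_of_sum_eq_sum_compl_add {K : Type*} [Field K] [CharZero K] [Fintype ι]
    {f : ι → K} {c : K} {i : ι} {S : Finset ι}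
    (hi : f i = ∑ j ∈ univ.erase i, f j + c) (hS : ∑ j ∈ S, f j = ∑ j ∈ Sᶜ, f j + c) :
    ∑ j ∈ S, f j = f i := by
  have hsplit := sum_add_sum_compl S f
  rw [← add_sum_erase _ f (mem_univ i)] at hsplit
  have h2 : (2 : K) * ∑ j ∈ S, f j = 2 * f i := by linear_combination hS + hsplit - hi
  exact mul_left_cancel₀ two_ne_zero h2

theorem Finset.eq_singleton_of_sum_eq_of_sum_erase_lt {M : Type*} [AddCommMonoid M]
    [PartialOrder M] [IsOrderedCancelAddMonoid M] {f : ι → M} (hf : ∀ j, 0 < f j)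
    {s S : Finset ι} {i : ι} (hSs : S ⊆ s) (hi : ∑ j ∈ s.erase i, f j < f i)
    (hS : ∑ j ∈ S, f j = f i) : S = {i} := by
  by_cases hiS : i ∈ S
  · refine eq_singleton_iff_unique_mem.2 ⟨hiS, fun j hjS => by_contra fun hji => ?_⟩
    exact (single_lt_sum hji hiS hjS (hf j) fun k _ _ => (hf k).le).ne' hS
  · have hS_le : ∑ j ∈ S, f j ≤ ∑ j ∈ s.erase i, f j :=
      sum_le_sum_of_subset_of_nonneg (fun j hj => mem_erase.2 ⟨fun h => hiS (h ▸ hj), hSs hj⟩)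
        fun k _ _ => (hf k).le
    exact absurd hS (hS_le.trans_lt hi).ne

end

theorem nonresonance_B1m_general
    (n m : ℕ) (hm : 1 ≤ m)
    (ω₀ : EuclideanSpace ℝ (Fin n)) (hω₀ : ω₀ ≠ 0)
    (ω : Fin m → EuclideanSpace ℝ (Fin n)) (hω : ∀ ℓ, ω ℓ ≠ 0)
    (h1 : ‖ω ⟨0, hm⟩‖ ^ 2
      = (∑ ℓ ∈ Finset.univ.erase ⟨0, hm⟩, ‖ω ℓ‖ ^ 2) + ‖ω₀‖ ^ 2) :
    ∀ S : Finset (Fin m),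
      (∑ ℓ ∈ S, ‖ω ℓ‖ ^ 2) = (∑ ℓ ∈ Sᶜ, ‖ω ℓ‖ ^ 2) + ‖ω₀‖ ^ 2 →
      S = {⟨0, hm⟩} := by
  intro S hS
  have hpos : ∀ ℓ, 0 < ‖ω ℓ‖ ^ 2 := fun ℓ => pow_pos (norm_pos_iff.2 (hω ℓ)) 2
  have herase_lt : ∑ ℓ ∈ univ.erase ⟨0, hm⟩, ‖ω ℓ‖ ^ 2 < ‖ω ⟨0, hm⟩‖ ^ 2 :=
    h1 ▸ lt_add_of_pos_right _ (pow_pos (norm_pos_iff.2 hω₀) 2)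
  exact eq_singleton_of_sum_eq_of_sum_erase_lt hpos (subset_univ S) herase_lt
    (sum_eq_of_sum_eq_sum_compl_add h1 hS)

/-- Non-resonance lemma for the phases in the recovery of `B_{1(m-1)}`:
if `‖ω₁‖² = Σ_{ℓ=2}^m ‖ω_ℓ‖² + ‖ω₀‖²`, then the only subset `S` of `{1,…,m}` with
`Σ_{ℓ∈S} ‖ω_ℓ‖² = Σ_{ℓ∉S} ‖ω_ℓ‖² + ‖ω₀‖²` is `S = {1}`. -/
theorem nonresonance_B1m
    (n m : ℕ) (hn : 1 ≤ n) (hm : 1 ≤ m)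
    (ω₀ : EuclideanSpace ℝ (Fin n)) (hω₀ : ω₀ ≠ 0)
    (ω : Fin m → EuclideanSpace ℝ (Fin n)) (hω : ∀ ℓ, ω ℓ ≠ 0)
    (h1 : ‖ω ⟨0, hm⟩‖ ^ 2
      = (∑ ℓ ∈ Finset.univ.erase ⟨0, hm⟩, ‖ω ℓ‖ ^ 2) + ‖ω₀‖ ^ 2) :
    ∀ S : Finset (Fin m),
      (∑ ℓ ∈ S, ‖ω ℓ‖ ^ 2) = (∑ ℓ ∈ Sᶜ, ‖ω ℓ‖ ^ 2) + ‖ω₀‖ ^ 2 →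
      S = {⟨0, hm⟩} :=
  nonresonance_B1m_general n m hm ω₀ hω₀ ω hω h1
end

section
/- For every n ≥ 2 and every m ≥ 2 there exist vectors ω₀, ω₁, …, ω_m ∈ ℝ^n, all nonzero, such that ω₁ = ω₂ + ⋯ + ω_m + ω₀ and ‖ω₁‖² = ‖ω₂‖² + ⋯ + ‖ω_m‖² + ‖ω₀‖². -/
/-!
Let `k` be the number of indices `2 ≤ ℓ ≤ m` and take `ω₂ = ⋯ = ω_m = u`, so that `ω₁ = k • u + ω₀`. Expanding
`‖k • u + ω₀‖²`, the energy identity becomes `2 ⟪u, ω₀⟫ = (1 - k) ‖u‖²`, which holds for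
`ω₀ = ((1 - k) / 2) • u + v` with `v ⟂ u`; the component `v ≠ 0` keeps `ω₀` and `ω₁` nonzero.
In `ℝⁿ`, `u` and `v` are two distinct standard basis vectors.
-/

open scoped RealInnerProductSpace

section InnerProductSpace

variable {E : Type*} [NormedAddCommGroup E] [InnerProductSpace ℝ E]

lemma norm_smul_add_sq_of_two_inner_eq {u w : E} {k : ℝ}
    (h : 2 * ⟪u, w⟫ = (1 - k) * ‖u‖ ^ 2) :
    ‖k • u + w‖ ^ 2 = k * ‖u‖ ^ 2 + ‖w‖ ^ 2 := by
  rw [norm_add_sq_real, real_inner_smul_left, norm_smul, mul_pow, Real.norm_eq_abs, sq_abs]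
  linear_combination k * h

lemma ne_zero_of_inner_right_ne_zero {x v : E} (h : ⟪x, v⟫ ≠ 0) : x ≠ 0 := by
  rintro rfl
  exact h (inner_zero_left v)

lemma exists_resonant_family_of_orthogonal {u v : E} (hu : u ≠ 0) (hv : v ≠ 0)
    (huv : ⟪u, v⟫ = 0) (m : ℕ) :
    ∃ ω : ℕ → E,
      (∀ ℓ, ω ℓ ≠ 0) ∧
      ω 1 = (∑ ℓ ∈ Finset.Icc 2 m, ω ℓ) + ω 0 ∧
      ‖ω 1‖ ^ 2 = (∑ ℓ ∈ Finset.Icc 2 m, ‖ω ℓ‖ ^ 2) + ‖ω 0‖ ^ 2 := by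
  set k : ℝ := ((Finset.Icc 2 m).card : ℝ)
  set w : E := ((1 - k) / 2) • u + v
  have hw : 2 * ⟪u, w⟫ = (1 - k) * ‖u‖ ^ 2 := by
    rw [inner_add_right, real_inner_smul_right, huv, real_inner_self_eq_norm_sq]
    ring
  have hv_inner : ∀ c : ℝ, ⟪c • u + w, v⟫ = ‖v‖ ^ 2 := fun c => by
    rw [inner_add_left, inner_add_left, real_inner_smul_left, real_inner_smul_left, huv,
      real_inner_self_eq_norm_sq]
    ring
  have hv_sq : ‖v‖ ^ 2 ≠ 0 := by positivity
  let ω : ℕ → E := fun ℓ => if ℓ = 0 then w else if ℓ = 1 then k • u + w else u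
  have hω_tail : ∀ ℓ ∈ Finset.Icc 2 m, ω ℓ = u := fun ℓ hℓ => by
    have : 2 ≤ ℓ := (Finset.mem_Icc.mp hℓ).1
    simp only [ω, if_neg (show ℓ ≠ 0 by omega), if_neg (show ℓ ≠ 1 by omega)]
  refine ⟨ω, fun ℓ => ?_, ?_, ?_⟩
  · match ℓ with
    | 0 =>
      show w ≠ 0
      exact ne_zero_of_inner_right_ne_zero (v := v) (by simpa using (hv_inner 0).trans_ne hv_sq)
    | 1 =>
      show k • u + w ≠ 0
      exact ne_zero_of_inner_right_ne_zero ((hv_inner k).trans_ne hv_sq)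
    | _ + 2 => exact hu
  · rw [Finset.sum_congr rfl hω_tail, Finset.sum_const, ← Nat.cast_smul_eq_nsmul ℝ]
    rfl
  · rw [Finset.sum_congr rfl fun ℓ hℓ => by rw [hω_tail ℓ hℓ], Finset.sum_const, nsmul_eq_mul]
    exact norm_smul_add_sq_of_two_inner_eq hw

end InnerProductSpace

theorem exists_resonant_frequencies_general
    (n m : ℕ) (hn : 2 ≤ n) :
    ∃ ω : ℕ → EuclideanSpace ℝ (Fin n),
      (∀ ℓ ≤ m, ω ℓ ≠ 0) ∧
      ω 1 = (∑ ℓ ∈ Finset.Icc 2 m, ω ℓ) + ω 0 ∧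
      ‖ω 1‖ ^ 2 = (∑ ℓ ∈ Finset.Icc 2 m, ‖ω ℓ‖ ^ 2) + ‖ω 0‖ ^ 2 := by
  have he := EuclideanSpace.orthonormal_single (𝕜 := ℝ) (ι := Fin n)
  have h01 : (⟨0, by omega⟩ : Fin n) ≠ ⟨1, by omega⟩ := by simp
  obtain ⟨ω, hω, hsum, hnorm⟩ :=
    exists_resonant_family_of_orthogonal (he.ne_zero _) (he.ne_zero _) (he.inner_eq_zero h01) m
  exact ⟨ω, fun ℓ _ => hω ℓ, hsum, hnorm⟩

/-- Existence of nonzero frequency vectors `ω₀, ω₁, …, ω_m` with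
`ω₁ = ω₂ + ⋯ + ω_m + ω₀` and `‖ω₁‖² = ‖ω₂‖² + ⋯ + ‖ω_m‖² + ‖ω₀‖²`. -/
theorem exists_resonant_frequencies
    (n m : ℕ) (hn : 2 ≤ n) (hm : 2 ≤ m) :
    ∃ ω : ℕ → EuclideanSpace ℝ (Fin n),
      (∀ ℓ ≤ m, ω ℓ ≠ 0) ∧
      ω 1 = (∑ ℓ ∈ Finset.Icc 2 m, ω ℓ) + ω 0 ∧
      ‖ω 1‖ ^ 2 = (∑ ℓ ∈ Finset.Icc 2 m, ‖ω ℓ‖ ^ 2) + ‖ω 0‖ ^ 2 :=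
  exists_resonant_frequencies_general n m hn
end

section
/- Let n ≥ 2 and let 2 ≤ b < m be integers. Let e₁ and e₂ be the first two standard basis vectors of ℝ^n, and set λ = √( b(b−1) / ((m−b) + (m−b)²) ). Define ω₁ = −(b−1)·e₁, ω_ℓ = e₁ for 2 ≤ ℓ ≤ b, ω_ℓ = λ·e₂ for b+1 ≤ ℓ ≤ m, and ω₀ = (b−m)·λ·e₂. Then: (i) Σ_{ℓ=1}^b ω_ℓ = Σ_{ℓ=b+1}^m ω_ℓ + ω₀; (ii) Σ_{ℓ=1}^b ‖ω_ℓ‖² = Σ_{ℓ=b+1}^m ‖ω_ℓ‖² + ‖ω₀‖²; (iii) ω_ℓ ≠ 0 for every 0 ≤ ℓ ≤ m. -/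
/-!
Both sides of (i) vanish: the head is `-(b-1) • e₁` plus `b - 1` copies of `e₁`, the tail is
`m - b` copies of `λ • e₂` plus `((b - m) * λ) • e₂`. In (ii) the head contributes
`(b-1)² + (b-1) = b(b-1)` and the tail `((m-b) + (m-b)²) λ²`, and `λ` is chosen exactly to make
these equal.
-/

open Finset

section Blocks

variable {E : Type*} [AddCommGroup E] [Module ℝ E] (f : ℕ → E) {c : E}

theorem sum_Icc_eq_smul_of_eq_const {a b : ℕ} (hab : a ≤ b + 1)
    (hf : ∀ ℓ, a ≤ ℓ → ℓ ≤ b → f ℓ = c) :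
    ∑ ℓ ∈ Icc a b, f ℓ = ((b : ℝ) + 1 - a) • c := by
  rw [sum_congr rfl fun ℓ hℓ => hf ℓ (mem_Icc.1 hℓ).1 (mem_Icc.1 hℓ).2, sum_const, Nat.card_Icc,
    ← Nat.cast_smul_eq_nsmul ℝ, Nat.cast_sub hab, Nat.cast_succ]

theorem sum_Icc_one_eq_add_smul_of_eq_const {b : ℕ} (hb : 1 ≤ b)
    (hf : ∀ ℓ, 2 ≤ ℓ → ℓ ≤ b → f ℓ = c) :
    ∑ ℓ ∈ Icc 1 b, f ℓ = f 1 + ((b : ℝ) - 1) • c := by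
  rw [← add_sum_Ioc_eq_sum_Icc hb, ← Icc_add_one_left_eq_Ioc,
    sum_Icc_eq_smul_of_eq_const f (a := 1 + 1) (by omega) hf]
  congr 2
  push_cast
  ring

end Blocks

theorem sq_sqrt_div_mul {x y : ℝ} (hx : 0 ≤ x) (hy : 0 < y) : √(x / y) ^ 2 * y = x := by
  rw [Real.sq_sqrt (div_nonneg hx hy.le), div_mul_cancel₀ x hy.ne']

/-- The explicit frequency vectors used to recover `B_{b(m-b)}` satisfy the resonance
conditions (i), (ii), and are all nonzero (iii). -/
theorem explicit_frequencies_resonant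
    (n : ℕ) (hn : 2 ≤ n) (b m : ℕ) (hb : 2 ≤ b) (hbm : b < m)
    (e₁ e₂ : EuclideanSpace ℝ (Fin n))
    (he₁ : e₁ = EuclideanSpace.single ⟨0, by omega⟩ 1)
    (he₂ : e₂ = EuclideanSpace.single ⟨1, by omega⟩ 1)
    (lam : ℝ)
    (hlam : lam = Real.sqrt (((b : ℝ) * ((b : ℝ) - 1))
      / (((m : ℝ) - (b : ℝ)) + ((m : ℝ) - (b : ℝ)) ^ 2)))
    (ω : ℕ → EuclideanSpace ℝ (Fin n))
    (hω1 : ω 1 = (-((b : ℝ) - 1)) • e₁)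
    (hωmid : ∀ ℓ, 2 ≤ ℓ → ℓ ≤ b → ω ℓ = e₁)
    (hωtail : ∀ ℓ, b + 1 ≤ ℓ → ℓ ≤ m → ω ℓ = lam • e₂)
    (hω0 : ω 0 = (((b : ℝ) - (m : ℝ)) * lam) • e₂) :
    (∑ ℓ ∈ Finset.Icc 1 b, ω ℓ) = (∑ ℓ ∈ Finset.Icc (b + 1) m, ω ℓ) + ω 0 ∧
    (∑ ℓ ∈ Finset.Icc 1 b, ‖ω ℓ‖ ^ 2)
      = (∑ ℓ ∈ Finset.Icc (b + 1) m, ‖ω ℓ‖ ^ 2) + ‖ω 0‖ ^ 2 ∧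
    (∀ ℓ ≤ m, ω ℓ ≠ 0) := by
  have hbR : (2 : ℝ) ≤ b := by exact_mod_cast hb
  have hbmR : (b : ℝ) < m := by exact_mod_cast hbm
  have hden : 0 < ((m : ℝ) - b) + ((m : ℝ) - b) ^ 2 := by nlinarith
  have hnum : 0 < (b : ℝ) * ((b : ℝ) - 1) := by nlinarith
  have hlam_pos : 0 < lam := hlam ▸ Real.sqrt_pos.2 (div_pos hnum hden)
  have hlam_sq : lam ^ 2 * (((m : ℝ) - b) + ((m : ℝ) - b) ^ 2) = b * ((b : ℝ) - 1) :=
    hlam ▸ sq_sqrt_div_mul hnum.le hden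
  have he₁_norm : ‖e₁‖ = 1 := by simp [he₁]
  have he₂_norm : ‖e₂‖ = 1 := by simp [he₂]
  have he₁_ne : e₁ ≠ 0 := by simp [he₁]
  have he₂_ne : e₂ ≠ 0 := by simp [he₂]
  refine ⟨?_, ?_, ?_⟩
  · rw [sum_Icc_one_eq_add_smul_of_eq_const ω (by omega) hωmid,
      sum_Icc_eq_smul_of_eq_const ω (by omega) hωtail, hω1, hω0]
    module
  · rw [sum_Icc_one_eq_add_smul_of_eq_const (‖ω ·‖ ^ 2) (by omega)
        fun ℓ h₁ h₂ => by rw [hωmid ℓ h₁ h₂],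
      sum_Icc_eq_smul_of_eq_const (‖ω ·‖ ^ 2) (by omega) fun ℓ h₁ h₂ => by rw [hωtail ℓ h₁ h₂],
      hω1, hω0]
    simp only [norm_smul, he₁_norm, he₂_norm, Real.norm_eq_abs, mul_one, sq_abs, smul_eq_mul]
    push_cast
    linear_combination -hlam_sq
  · intro ℓ hℓ
    rcases Nat.lt_trichotomy ℓ 1 with h | rfl | h
    · rw [Nat.lt_one_iff.1 h, hω0]
      exact smul_ne_zero (mul_ne_zero (by linarith) hlam_pos.ne') he₂_ne
    · rw [hω1]
      exact smul_ne_zero (by linarith) he₁_ne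
    · rcases le_or_gt ℓ b with h' | h'
      · rw [hωmid ℓ h h']; exact he₁_ne
      · rw [hωtail ℓ h' hℓ]; exact smul_ne_zero hlam_pos.ne' he₂_ne
end
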